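/- arXiv:1703.05997 — 2 statements merged into one kernel-verified Lean document; each statement's English description precedes it below -/
import Mathlib

section
/- Let connections be processed in order of nondecreasing departure time, and suppose processing a connection c only ever assigns to tentative arrival times values that are at least c's departure time, and can only decrease tentative values. Then once the tentative arrival time S[t] of the target satisfies S[t] ≤ c_dep_time for the current connection c, S[t] is never changed by processing any subsequent connection. (Correctness of the stopping criterion.) -/
section StoppingCriterion

variable {α : Type*} [LinearOrder α] {dep S : ℕ → α}

theorem succ_eq_of_le_dep_succ (hdec : ∀ k, S (k + 1) ≤ S k)
    (hnew : ∀ k, S (k + 1) < S k → dep (k + 1) ≤ S (k + 1))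
    {n : ℕ} (hn : S n ≤ dep (n + 1)) : S (n + 1) = S n := by
  refine (hdec n).eq_or_lt.resolve_right fun hlt => ?_
  exact (hlt.trans_le hn).not_ge (hnew n hlt)

theorem eq_of_le_dep_succ (hdep : Monotone dep) (hdec : ∀ k, S (k + 1) ≤ S k)
    (hnew : ∀ k, S (k + 1) < S k → dep (k + 1) ≤ S (k + 1))
    {k : ℕ} (hstop : S k ≤ dep (k + 1)) {j : ℕ} (hj : k ≤ j) : S j = S k := by
  induction j, hj using Nat.le_induction with
  | base => rfl
  | succ n hkn ih =>
    have hn : S n ≤ dep (n + 1) := ih ▸ hstop.trans (hdep (Nat.succ_le_succ hkn))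
    rw [succ_eq_of_le_dep_succ hdec hnew hn, ih]

end StoppingCriterion

/-- Correctness of the stopping criterion: connections are processed in order of
nondecreasing departure time (`dep k` is the departure time of the connection processed
in step `k+1`... here `dep (k+1)` is the departure time of step `k+1`), tentative arrival
times of the target only decrease, and any newly assigned value in step `k+1` is at
least `dep (k+1)`.  Once `S k ≤ dep (k+1)`, the tentative arrival time never changes. -/
theorem stmt_6 (dep S : ℕ → ℝ) (hdep : Monotone dep)
    (hdec : ∀ k, S (k + 1) ≤ S k)
    (hnew : ∀ k, S (k + 1) < S k → dep (k + 1) ≤ S (k + 1))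
    (k : ℕ) (hstop : S k ≤ dep (k + 1)) :
    ∀ j, k ≤ j → S j = S k :=
  fun _ hj => eq_of_le_dep_succ hdep hdec hnew hstop hj
end

section
/- No connection departing strictly before the source time τ can be part of any journey departing at or after τ: for every journey j with j_dep_time ≥ τ, every leg l of j satisfies l_enter_dep_time ≥ τ. (Correctness of the starting criterion.) -/
/-- A connection: a train driving from one stop to another without intermediate halt. -/
structure Connection where
  depStop : ℕ
  arrStop : ℕ
  depTime : ℝ
  arrTime : ℝ
  trip : ℕ

/-- A leg of a journey: a pair of connections (enter, exit) of the same trip. -/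
structure Leg where
  enter : Connection
  exit : Connection

theorem Leg.enter_depTime_le_of_transfer {l l' : Leg} {d : ℝ} (hd : 0 ≤ d)
    (hl : l.enter.depTime ≤ l.exit.arrTime) (ht : l.exit.arrTime + d ≤ l'.enter.depTime) :
    l.enter.depTime ≤ l'.enter.depTime := by
  linarith

theorem Leg.enter_depTime_zero_le_of_transfers {k : ℕ} {legs : ℕ → Leg} {fdur : ℕ → ℝ}
    (hfdur : ∀ i, i + 1 < k → 0 ≤ fdur (i + 1))
    (hleg : ∀ i, i + 1 < k → (legs i).enter.depTime ≤ (legs i).exit.arrTime)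
    (htransfer : ∀ i, i + 1 < k →
      (legs i).exit.arrTime + fdur (i + 1) ≤ (legs (i + 1)).enter.depTime) :
    ∀ i, i < k → (legs 0).enter.depTime ≤ (legs i).enter.depTime := by
  intro i
  induction i with
  | zero => exact fun _ ↦ le_rfl
  | succ n ih =>
    intro hlt
    exact (ih (Nat.lt_of_succ_lt hlt)).trans <|
      enter_depTime_le_of_transfer (hfdur n hlt) (hleg n hlt) (htransfer n hlt)

theorem stmt_7_general (k : ℕ) (legs : ℕ → Leg) (fdur : ℕ → ℝ) (τ : ℝ)
    (hfpos : ∀ i, i ≤ k → 0 < fdur i)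
    (hleg : ∀ i, i < k → (legs i).enter.depTime < (legs i).exit.arrTime)
    (htransfer : ∀ i, i + 1 < k →
      (legs i).exit.arrTime + fdur (i + 1) ≤ (legs (i + 1)).enter.depTime)
    (hdep : τ ≤ (legs 0).enter.depTime - fdur 0) :
    ∀ i, i < k → τ ≤ (legs i).enter.depTime := by
  intro i hi
  have hτ : τ ≤ (legs 0).enter.depTime := by linarith [hfpos 0 k.zero_le]
  exact hτ.trans <| Leg.enter_depTime_zero_le_of_transfers
    (fun j hj ↦ (hfpos (j + 1) hj.le).le) (fun j hj ↦ (hleg j (Nat.lt_of_succ_lt hj)).le)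
    htransfer i hi

/-- Correctness of the starting criterion: in a valid journey departing no earlier than
the source time `τ`, every leg's enter connection departs no earlier than `τ`. -/
theorem stmt_7 (k : ℕ) (hk : 0 < k) (legs : ℕ → Leg) (fdur : ℕ → ℝ) (τ : ℝ)
    (hfpos : ∀ i, i ≤ k → 0 < fdur i)
    (hleg : ∀ i, i < k → (legs i).enter.depTime < (legs i).exit.arrTime)
    (htransfer : ∀ i, i + 1 < k →
      (legs i).exit.arrTime + fdur (i + 1) ≤ (legs (i + 1)).enter.depTime)
    (hdep : τ ≤ (legs 0).enter.depTime - fdur 0) :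
    ∀ i, i < k → τ ≤ (legs i).enter.depTime :=
  stmt_7_general k legs fdur τ hfpos hleg htransfer hdep
end
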